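/- For a simple undirected graph with adjacency matrix A, the number of paths of length 3 from node i to node j is given entrywise by the matrix P_3 = A^3 − (I ∘ A^2)·A − I ∘ A^3 − A·(I ∘ A^2) + A. -/

import Mathlib

/-!
A walk `i, a, b, j` of length three in a loopless graph is a path exactly when none of the
coincidences `b = i`, `a = j`, `i = j` occurs, and of these only `b = i` together with `a = j` can
happen at once. Inclusion–exclusion over them subtracts from `(A³)ᵢⱼ` the walks `i a i j`
(`(A²)ᵢᵢ Aᵢⱼ`), the walks `i j b j` (`Aᵢⱼ (A²)ⱼⱼ`) and the closed walks at `i = j` (`(A³)ᵢᵢ`), and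
adds back the walk `i j i j` (`Aᵢⱼ`).
-/

open SimpleGraph Matrix Finset

namespace Matrix

variable {V R : Type*} [Fintype V] [DecidableEq V]

theorem pow_three_apply [CommSemiring R] (M : Matrix V V R) (i j : V) :
    (M ^ 3) i j = ∑ a, ∑ b, M i a * M a b * M b j := by
  simp only [pow_succ, pow_zero, one_mul, mul_apply, Finset.sum_mul]
  exact Finset.sum_comm

theorem sum_sum_ite_ne_mul_mul_of_diag_eq_zero [CommRing R] {M : Matrix V V R}
    (hM : M.diag = 0) (i j : V) :
    ∑ a, ∑ b, (if b ≠ i ∧ a ≠ j ∧ i ≠ j then M i a * M a b * M b j else 0) =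
      (M ^ 3 - 1 ⊙ (M ^ 2) * M - 1 ⊙ (M ^ 3) - M * 1 ⊙ (M ^ 2) : Matrix V V R) i j
        + M i j * M j i * M i j := by
  have hM' (k : V) : M k k = 0 := congrFun hM k
  -- `i = j` together with `b = i` or with `a = j` forces a diagonal factor.
  have h (a b : V) : (if b ≠ i ∧ a ≠ j ∧ i ≠ j then M i a * M a b * M b j else 0) =
      M i a * M a b * M b j * (1 - (if b = i then 1 else 0) - (if a = j then 1 else 0)
        - (if i = j then 1 else 0) + (if b = i then 1 else 0) * (if a = j then 1 else 0)) := by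
    by_cases hbi : b = i <;> by_cases haj : a = j <;> by_cases hij : i = j <;> simp_all
  simp only [h, one_hadamard, sub_apply, diagonal_apply, diag_apply, pow_three_apply, sq,
    mul_apply, ite_mul, zero_mul, sum_ite_eq, mem_univ, if_true, mul_add, mul_sub, mul_one,
    mul_ite, mul_zero, sum_add_distrib, sum_sub_distrib, sum_ite_eq', sum_ite_irrel,
    sum_const_zero, sum_mul, mul_sum]
  obtain rfl | hij := eq_or_ne i j
  · simp only [if_true, mul_assoc]; ring
  · simp only [hij, if_false, mul_assoc]; ring

end Matrix

namespace SimpleGraph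

variable {V : Type*} {G : SimpleGraph V}

theorem Walk.isPath_cons_cons_cons_iff {i a b j : V} (h₁ : G.Adj i a) (h₂ : G.Adj a b)
    (h₃ : G.Adj b j) :
    (Walk.cons h₁ (.cons h₂ (.cons h₃ .nil))).IsPath ↔ b ≠ i ∧ a ≠ j ∧ i ≠ j := by
  grind [Walk.isPath_def, Walk.support_cons, Walk.support_nil, h₁.ne, h₂.ne, h₃.ne]

variable (G) in
def pathLengthThreeEquiv (i j : V) :
    {w : G.Walk i j // w.length = 3 ∧ w.IsPath} ≃
      {p : V × V // G.Adj i p.1 ∧ G.Adj p.1 p.2 ∧ G.Adj p.2 j ∧ p.2 ≠ i ∧ p.1 ≠ j ∧ i ≠ j} where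
  toFun
    | ⟨.cons h₁ (.cons h₂ (.cons h₃ .nil)), _, hp⟩ =>
      ⟨(_, _), h₁, h₂, h₃, (Walk.isPath_cons_cons_cons_iff h₁ h₂ h₃).1 hp⟩
  invFun
    | ⟨_, h₁, h₂, h₃, hne⟩ =>
      ⟨.cons h₁ (.cons h₂ (.cons h₃ .nil)), rfl, (Walk.isPath_cons_cons_cons_iff h₁ h₂ h₃).2 hne⟩
  left_inv
    | ⟨.cons _ (.cons _ (.cons _ .nil)), _, _⟩ => rfl
  right_inv
    | ⟨_, _, _, _, _⟩ => rfl

variable [Fintype V] [DecidableEq V] [DecidableRel G.Adj]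

theorem card_isPath_length_eq_three (i j : V) :
    Nat.card {w : G.Walk i j // w.length = 3 ∧ w.IsPath} =
      #{p : V × V | G.Adj i p.1 ∧ G.Adj p.1 p.2 ∧ G.Adj p.2 j ∧ p.2 ≠ i ∧ p.1 ≠ j ∧ i ≠ j} := by
  rw [Nat.card_congr (G.pathLengthThreeEquiv i j), Nat.card_eq_fintype_card, Fintype.card_subtype]

theorem natCast_card_isPath_length_eq_three {R : Type*} [NonAssocSemiring R] (i j : V) :
    (Nat.card {w : G.Walk i j // w.length = 3 ∧ w.IsPath} : R) =
      ∑ a, ∑ b, if b ≠ i ∧ a ≠ j ∧ i ≠ j then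
        G.adjMatrix R i a * G.adjMatrix R a b * G.adjMatrix R b j else 0 := by
  rw [card_isPath_length_eq_three, card_filter, Nat.cast_sum, Fintype.sum_prod_type]
  refine sum_congr rfl fun a _ => sum_congr rfl fun b _ => ?_
  simp only [adjMatrix_apply, mul_ite, mul_one, mul_zero]
  split_ifs <;> simp_all

theorem of_natCast_card_isPath_length_eq_three {R : Type*} [CommRing R] :
    (Matrix.of fun i j => (Nat.card {w : G.Walk i j // w.length = 3 ∧ w.IsPath} : R)) =
      G.adjMatrix R ^ 3 - 1 ⊙ (G.adjMatrix R ^ 2) * G.adjMatrix R - 1 ⊙ (G.adjMatrix R ^ 3)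
        - G.adjMatrix R * 1 ⊙ (G.adjMatrix R ^ 2) + G.adjMatrix R := by
  ext i j
  have hA : G.adjMatrix R i j * G.adjMatrix R j i * G.adjMatrix R i j = G.adjMatrix R i j := by
    by_cases h : G.Adj i j <;> simp [h, G.adj_comm j i]
  rw [of_apply, natCast_card_isPath_length_eq_three,
    sum_sum_ite_ne_mul_mul_of_diag_eq_zero (G.diag_adjMatrix R), hA, Matrix.add_apply]

end SimpleGraph

/-- The path matrix of length 3: P₃ = A³ − (I∘A²)·A − I∘A³ − A·(I∘A²) + A. -/
theorem stmt3 (N : ℕ) (G : SimpleGraph (Fin N)) [DecidableRel G.Adj] :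
    (Matrix.of fun i j : Fin N =>
        (Nat.card {w : G.Walk i j // w.length = 3 ∧ w.IsPath} : ℤ)) =
      G.adjMatrix ℤ ^ 3
        - Matrix.hadamard (1 : Matrix (Fin N) (Fin N) ℤ) (G.adjMatrix ℤ ^ 2) * G.adjMatrix ℤ
        - Matrix.hadamard (1 : Matrix (Fin N) (Fin N) ℤ) (G.adjMatrix ℤ ^ 3)
        - G.adjMatrix ℤ * Matrix.hadamard (1 : Matrix (Fin N) (Fin N) ℤ) (G.adjMatrix ℤ ^ 2)
        + G.adjMatrix ℤ :=
  G.of_natCast_card_isPath_length_eq_three
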